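/- Let X, Y be independent standard Gaussian random variables, a > 0, b ∈ ℝ, c > 0, β = (c−b)/a, and M = cY · sgn(aX + bY − cY). Then M has a probability density function given by f_M(z) = (2/c) φ(z/c) Φ(−β z/c), where φ and Φ are the standard normal density and distribution function. -/

import Mathlib

/-! Since `a > 0`, `sgn(aX + bY − cY) = sgn(X − βY)`. Given `Y = y`, `M` equals `cy` with
probability `Φ(−βy)` and `−cy` with probability `Φ(βy)`, the tie `X = βY` being null. The
symmetry `y ↦ −y` of the Gaussian carries the second branch onto the first, so the law of `M` is
twice the image of `φ(y) Φ(−βy) dy` under `y ↦ cy`, whose density is `(1/c) φ(z/c) Φ(−βz/c)`. -/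

open MeasureTheory ProbabilityTheory Real

/-- Standard normal density. -/
noncomputable def stdPdf (x : ℝ) : ℝ := (Real.sqrt (2 * Real.pi))⁻¹ * Real.exp (-x ^ 2 / 2)

/-- Standard normal distribution function. -/
noncomputable def stdCdf (x : ℝ) : ℝ := ∫ t in Set.Iic x, stdPdf t

open Set
open scoped ENNReal

@[fun_prop]
lemma Real.measurable_sign : Measurable Real.sign :=
  measurable_const.ite measurableSet_Iio (measurable_const.ite measurableSet_Ioi measurable_const)

lemma Real.sign_mul_of_pos {a : ℝ} (ha : 0 < a) (r : ℝ) : sign (a * r) = sign r := by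
  rcases lt_trichotomy r 0 with hr | rfl | hr
  · rw [sign_of_neg hr, sign_of_neg (mul_neg_of_pos_of_neg ha hr)]
  · rw [mul_zero]
  · rw [sign_of_pos hr, sign_of_pos (mul_pos ha hr)]

lemma MeasurableEquiv.map_withDensity {α β : Type*} [MeasurableSpace α] [MeasurableSpace β]
    (e : α ≃ᵐ β) (μ : Measure α) (f : α → ℝ≥0∞) :
    (μ.withDensity f).map e = (μ.map e).withDensity (f ∘ e.symm) := by
  ext s hs
  rw [Measure.map_apply e.measurable hs, withDensity_apply _ (e.measurable hs),
    withDensity_apply _ hs, e.restrict_map, lintegral_map_equiv]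
  simp

namespace MeasureTheory.Measure

lemma map_restrict_of_eqOn_const {α β : Type*} [MeasurableSpace α] [MeasurableSpace β]
    (μ : Measure α) {f : α → β} {s : Set α} {b : β} (hs : MeasurableSet s)
    (hf : ∀ x ∈ s, f x = b) : (μ.restrict s).map f = μ s • dirac b := by
  rw [map_congr ((ae_restrict_mem hs).mono hf), map_const, restrict_apply_univ]

lemma map_mul_sign_sub (ν : Measure ℝ) [NullSingletonClass ν] (u t : ℝ) :
    ν.map (fun x => u * sign (x - t)) = ν (Ioi t) • dirac u + ν (Iio t) • dirac (-u) := by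
  have hsplit : ν = ν.restrict (Ioi t) + ν.restrict (Iio t) := by
    rw [restrict_congr_set Iio_ae_eq_Iic, ← compl_Ioi,
      restrict_add_restrict_compl measurableSet_Ioi]
  conv_lhs => rw [hsplit]
  rw [Measure.map_add _ _ (by fun_prop),
    map_restrict_of_eqOn_const _ measurableSet_Ioi fun x hx => ?pos,
    map_restrict_of_eqOn_const _ measurableSet_Iio fun x hx => ?neg]
  case pos => rw [sign_of_pos (sub_pos.2 hx), mul_one]
  case neg => rw [sign_of_neg (sub_neg.2 hx), mul_neg_one]

lemma measurable_measure_Ioi (μ : Measure ℝ) : Measurable fun t => μ (Ioi t) :=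
  Antitone.measurable fun _ _ hst => measure_mono (Ioi_subset_Ioi hst)

lemma map_prod_mul_sign_sub {β : Type*} [MeasurableSpace β] (μ : Measure ℝ) (ν : Measure β)
    [SFinite μ] [SFinite ν] [NullSingletonClass μ] {f h : β → ℝ} (hf : Measurable f)
    (hh : Measurable h) :
    (μ.prod ν).map (fun p => f p.2 * sign (p.1 - h p.2)) =
      (ν.withDensity fun y => μ (Ioi (h y))).map f +
        (ν.withDensity fun y => μ (Iio (h y))).map (fun y => -f y) := by
  ext s hs
  set g : ℝ × β → ℝ := fun p => f p.2 * sign (p.1 - h p.2)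
  have hg : Measurable g := by fun_prop
  have hfn : Measurable fun y => -f y := hf.neg
  have hIoi : Measurable ((f ⁻¹' s).indicator fun y => μ (Ioi (h y))) :=
    ((measurable_measure_Ioi μ).comp hh).indicator (hf hs)
  have hfiber : ∀ y, μ ((fun x => (x, y)) ⁻¹' (g ⁻¹' s)) =
      (f ⁻¹' s).indicator (fun y => μ (Ioi (h y))) y +
        ((fun y => -f y) ⁻¹' s).indicator (fun y => μ (Iio (h y))) y := by
    intro y
    change μ ((fun x => f y * sign (x - h y)) ⁻¹' s) = _
    rw [← map_apply (by fun_prop) hs, map_mul_sign_sub]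
    by_cases h₁ : f y ∈ s <;> by_cases h₂ : -f y ∈ s <;> simp [dirac_apply' _ hs, h₁, h₂]
  rw [map_apply hg hs, prod_apply_symm (hg hs), add_apply, map_apply hf hs, map_apply hfn hs,
    withDensity_apply _ (hf hs), withDensity_apply _ (hfn hs), ← lintegral_indicator (hf hs),
    ← lintegral_indicator (hfn hs), ← lintegral_add_left hIoi]
  simp_rw [hfiber]

lemma measure_Iio_neg_of_map_neg {μ : Measure ℝ} (hμ : μ.map (fun x => -x) = μ) (t : ℝ) :
    μ (Iio (-t)) = μ (Ioi t) := by
  conv_lhs => rw [← hμ, map_apply measurable_neg measurableSet_Iio]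
  simp

lemma map_prod_mul_sign_sub_of_map_neg (μ : Measure ℝ) [SFinite μ] [NullSingletonClass μ]
    (hμ : μ.map (fun x => -x) = μ) {f h : ℝ → ℝ} (hf : Measurable f) (hh : Measurable h)
    (hf_odd : ∀ y, f (-y) = -f y) (hh_odd : ∀ y, h (-y) = -h y) :
    (μ.prod μ).map (fun p => f p.2 * sign (p.1 - h p.2)) =
      2 • (μ.withDensity fun y => μ (Ioi (h y))).map f := by
  rw [map_prod_mul_sign_sub μ μ hf hh, two_smul]
  congr 1
  set e := MeasurableEquiv.neg ℝ
  have he : ⇑e = fun y => -y := rfl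
  have hneg : (fun y => -f y) = f ∘ e := funext fun y => (hf_odd y).symm
  rw [hneg, ← map_map hf e.measurable, e.map_withDensity, MeasurableEquiv.symm_neg, he, hμ]
  simp only [Function.comp_def, hh_odd, measure_Iio_neg_of_map_neg hμ]

end MeasureTheory.Measure

lemma Real.map_const_mul_volume_withDensity {c : ℝ} (hc : c ≠ 0) (f : ℝ → ℝ≥0∞) :
    (volume.withDensity f).map (c * ·) =
      ENNReal.ofReal |c⁻¹| • volume.withDensity fun z => f (c⁻¹ * z) := by
  rw [← MeasurableEquiv.coe_mulLeft₀ hc, MeasurableEquiv.map_withDensity,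
    MeasurableEquiv.coe_mulLeft₀, Real.map_volume_mul_left hc, withDensity_smul_measure]
  rfl

lemma gaussianPDFReal_zero_one : gaussianPDFReal 0 1 = stdPdf := by
  funext x; simp [gaussianPDFReal, stdPdf]

lemma gaussianReal_zero_one_eq_withDensity :
    gaussianReal 0 1 = volume.withDensity fun x => ENNReal.ofReal (stdPdf x) := by
  rw [gaussianReal_of_var_ne_zero 0 one_ne_zero, gaussianPDF_def, gaussianPDFReal_zero_one]

lemma stdPdf_nonneg (x : ℝ) : 0 ≤ stdPdf x := by
  unfold stdPdf; positivity

lemma stdPdf_neg (x : ℝ) : stdPdf (-x) = stdPdf x := by simp [stdPdf]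

@[fun_prop]
lemma measurable_stdPdf : Measurable stdPdf :=
  gaussianPDFReal_zero_one ▸ measurable_gaussianPDFReal 0 1

lemma integrable_stdPdf : Integrable stdPdf :=
  gaussianPDFReal_zero_one ▸ integrable_gaussianPDFReal 0 1

lemma monotone_stdCdf : Monotone stdCdf := fun _ _ hxy =>
  setIntegral_mono_set integrable_stdPdf.integrableOn (.of_forall stdPdf_nonneg)
    (Iic_subset_Iic.2 hxy).eventuallyLE

@[fun_prop]
lemma measurable_stdCdf : Measurable stdCdf := monotone_stdCdf.measurable

lemma gaussianReal_Ioi (t : ℝ) : gaussianReal 0 1 (Ioi t) = ENNReal.ofReal (stdCdf (-t)) := by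
  rw [gaussianReal_apply_eq_integral 0 one_ne_zero, gaussianPDFReal_zero_one, stdCdf,
    ← integral_comp_neg_Ioi]
  simp_rw [stdPdf_neg]

lemma two_nsmul_map_const_mul_withDensity_gaussianReal_Ioi {c : ℝ} (hc : 0 < c) (β : ℝ) :
    2 • ((gaussianReal 0 1).withDensity fun y => gaussianReal 0 1 (Ioi (β * y))).map (c * ·) =
      volume.withDensity fun z =>
        ENNReal.ofReal (2 / c * stdPdf (z / c) * stdCdf (-β * z / c)) := by
  simp_rw [gaussianReal_Ioi]
  rw [gaussianReal_zero_one_eq_withDensity, ← withDensity_mul _ (by fun_prop) (by fun_prop),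
    Real.map_const_mul_volume_withDensity hc.ne', two_smul,
    ← withDensity_smul' _ _ ENNReal.ofReal_ne_top, ← withDensity_add_left (by fun_prop)]
  congr 1
  funext z
  have hz : c⁻¹ * z = z / c := inv_mul_eq_div c z
  have hβz : -(β * (z / c)) = -β * z / c := by ring
  have htwo : 2 / c = 2 * |c⁻¹| := by rw [abs_of_pos (inv_pos.2 hc), div_eq_mul_inv]
  simp only [Pi.add_apply, Pi.smul_apply, Pi.mul_apply, smul_eq_mul, hz, hβz]
  rw [htwo, ENNReal.ofReal_mul (by positivity [stdPdf_nonneg (z / c)]),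
    ENNReal.ofReal_mul (by positivity), ENNReal.ofReal_mul zero_le_two, ENNReal.ofReal_ofNat]
  ring

/-- With `X, Y` independent standard Gaussians, `a > 0`, `c > 0`, `β = (c−b)/a`, the
random variable `M = cY · sgn(aX + bY − cY)` has density `z ↦ (2/c) φ(z/c) Φ(−βz/c)`. -/
theorem density_of_negative_payoff {Ω : Type*} [MeasureSpace Ω]
    [IsProbabilityMeasure (ℙ : Measure Ω)]
    (X Y : Ω → ℝ) (hXm : Measurable X) (hYm : Measurable Y)
    (hindep : IndepFun X Y ℙ)
    (hX : Measure.map X ℙ = gaussianReal 0 1)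
    (hY : Measure.map Y ℙ = gaussianReal 0 1)
    (a b c β : ℝ) (ha : 0 < a) (hc : 0 < c) (hβ : β = (c - b) / a) :
    Measure.map (fun ω => c * Y ω * Real.sign (a * X ω + b * Y ω - c * Y ω)) ℙ =
      volume.withDensity
        (fun z => ENNReal.ofReal ((2 / c) * stdPdf (z / c) * stdCdf (-β * z / c))) := by
  have hM : (fun ω => c * Y ω * sign (a * X ω + b * Y ω - c * Y ω)) =
      (fun p : ℝ × ℝ => c * p.2 * sign (p.1 - β * p.2)) ∘ fun ω => (X ω, Y ω) := by
    ext ω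
    have hlin : a * X ω + b * Y ω - c * Y ω = a * (X ω - β * Y ω) := by
      rw [hβ]; field_simp; ring
    simp only [Function.comp_apply, hlin, Real.sign_mul_of_pos ha]
  have hlaw : (ℙ : Measure Ω).map (fun ω => (X ω, Y ω)) =
      (gaussianReal 0 1).prod (gaussianReal 0 1) := by
    have := (indepFun_iff_map_prod_eq_prod_map_map hXm.aemeasurable hYm.aemeasurable).1 hindep
    rwa [hX, hY] at this
  have hsymm : (gaussianReal 0 1).map (fun x => -x) = gaussianReal 0 1 := by
    simpa using gaussianReal_map_neg (μ := 0) (v := 1)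
  have : NullSingletonClass (gaussianReal 0 1) := nullSingletonClass_gaussianReal one_ne_zero
  rw [hM, ← Measure.map_map (by fun_prop) (hXm.prodMk hYm), hlaw,
    Measure.map_prod_mul_sign_sub_of_map_neg _ hsymm (measurable_const_mul c)
      (measurable_const_mul β) (mul_neg c) (mul_neg β),
    two_nsmul_map_const_mul_withDensity_gaussianReal_Ioi hc]
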